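/- arXiv:1812.08958 — 2 statements merged into one kernel-verified Lean document; each statement's English description precedes it below -/
import Mathlib

section
/- Let G = (V,E) be a finite undirected graph, φ ∈ (0,1), and A ⊆ V with complement Ā = V∖A. If A is a nearly φ expander in G and |E_G(A,Ā)| ≤ φ·vol_G(A)/10, then there exists A' ⊆ A such that Φ_{G{A'}} ≥ φ/6, vol_G(A') ≥ vol_G(A) − 4·|E_G(A,Ā)|/φ, and |E_G(A', V∖A')| ≤ 2·|E_G(A,Ā)|. -/
/-!
STATEMENT 3 (Trimming, Theorem 2.1):
Let `G = (V,E)`, `φ ∈ (0,1)`, `A ⊆ V`. If `A` is a nearly `φ` expander in `G`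
and `|E_G(A,Ā)| ≤ φ·vol_G(A)/10`, then there is `A' ⊆ A` with `Φ_{G{A'}} ≥ φ/6`,
`vol_G(A') ≥ vol_G(A) − 4·|E_G(A,Ā)|/φ`, and `|E_G(A', V∖A')| ≤ 2·|E_G(A,Ā)|`.
-/

open Finset

noncomputable section
open scoped Classical

/-- `|E_G(S,T)|`: the number of edges of `G` with one endpoint in `S` and the other in `T`. -/
def eCount {V : Type*} [Fintype V] [DecidableEq V] (G : SimpleGraph V) (S T : Finset V) : ℕ :=
  ((S ×ˢ T).filter fun p => G.Adj p.1 p.2).card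

/-- `vol_G(S) = ∑_{v ∈ S} deg_G(v)`. -/
def vol {V : Type*} [Fintype V] [DecidableEq V] (G : SimpleGraph V) (S : Finset V) : ℕ :=
  ∑ v ∈ S, G.degree v

lemma eCount_symm {V : Type*} [Fintype V] [DecidableEq V] (G : SimpleGraph V) (S T : Finset V) :
    eCount G S T = eCount G T S := by
  unfold eCount
  apply Finset.card_nbij' (fun p => (p.2, p.1)) (fun p => (p.2, p.1)) <;>
    simp +contextual [Set.MapsTo, Set.LeftInvOn, Set.RightInvOn, Finset.mem_filter, Finset.mem_product, and_comm, G.adj_comm]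

lemma eCount_union_right {V : Type*} [Fintype V] [DecidableEq V] (G : SimpleGraph V)
    (S T U : Finset V) (h : Disjoint T U) :
    eCount G S (T ∪ U) = eCount G S T + eCount G S U := by
  unfold eCount
  rw [Finset.product_union, Finset.filter_union, Finset.card_union_of_disjoint]
  refine Finset.disjoint_filter_filter ?_
  rw [Finset.disjoint_left]
  rintro ⟨a,b⟩ hab hab'
  simp only [Finset.mem_product] at hab hab'
  exact absurd (h.le_bot (Finset.mem_inter.2 ⟨hab.2, hab'.2⟩)) (Finset.notMem_empty b)

theorem trimming
    {V : Type*} [Fintype V] [DecidableEq V] (G : SimpleGraph V) (φ : ℝ) (A : Finset V)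
    (hφ0 : 0 < φ) (hφ1 : φ < 1)
    -- A is a nearly φ expander in G
    (hnear : ∀ S ⊆ A, (vol G S : ℝ) ≤ (vol G A : ℝ) / 2 →
      φ * (vol G S : ℝ) ≤ (eCount G S Sᶜ : ℝ))
    -- |E(A, Ā)| ≤ φ·vol(A)/10
    (hcut : (eCount G A Aᶜ : ℝ) ≤ φ * (vol G A : ℝ) / 10) :
    ∃ A' ⊆ A,
      -- Φ_{G{A'}} ≥ φ/6
      (∀ S ⊆ A', (vol G S : ℝ) ≤ (vol G A' : ℝ) / 2 →
        (φ / 6) * (vol G S : ℝ) ≤ (eCount G S (A' \ S) : ℝ)) ∧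
      -- vol(A') ≥ vol(A) − 4·|E(A,Ā)|/φ
      (vol G A : ℝ) - 4 * (eCount G A Aᶜ : ℝ) / φ ≤ (vol G A' : ℝ) ∧
      -- |E(A', V∖A')| ≤ 2·|E(A,Ā)|
      (eCount G A' A'ᶜ : ℝ) ≤ 2 * (eCount G A Aᶜ : ℝ) := by
  set f : Finset V → ℝ := fun B => φ * (vol G B : ℝ) - (3/2) * (eCount G B Bᶜ : ℝ) with hf
  obtain ⟨A', hA'mem, hmax⟩ := A.powerset.exists_max_image f ⟨A, Finset.mem_powerset_self A⟩
  rw [Finset.mem_powerset] at hA'mem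
  have hmaxA : f A ≤ f A' := hmax A (Finset.mem_powerset_self A)
  have hvolmono : ∀ S T : Finset V, S ⊆ T → (vol G S : ℝ) ≤ (vol G T : ℝ) := by
    intro S T hST
    exact_mod_cast Finset.sum_le_sum_of_subset hST
  have hvolA' : (vol G A' : ℝ) ≤ (vol G A : ℝ) := hvolmono _ _ hA'mem
  refine ⟨A', hA'mem, ?_, ?_, ?_⟩
  · -- expansion
    intro S hS hSvol
    have hmaxS : f (A' \ S) ≤ f A' := hmax _ (Finset.mem_powerset.2 ((Finset.sdiff_subset).trans hA'mem))
    -- decompositions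
    have hdisj : Disjoint (A' \ S) A'ᶜ := by
      rw [Finset.disjoint_left]; intro a ha hb
      simp only [Finset.mem_sdiff, Finset.mem_compl] at ha hb; exact hb ha.1
    have hdisj2 : Disjoint S A'ᶜ := by
      rw [Finset.disjoint_left]; intro a ha hb
      simp only [Finset.mem_compl] at hb; exact hb (hS ha)
    have hScompl : Sᶜ = (A' \ S) ∪ A'ᶜ := by
      ext x
      simp only [Finset.mem_compl, Finset.mem_union, Finset.mem_sdiff]
      have hxa := @hS x
      tauto
    have hDcompl : (A' \ S)ᶜ = S ∪ A'ᶜ := by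
      ext x
      simp only [Finset.mem_compl, Finset.mem_union, Finset.mem_sdiff]
      have hxa := @hS x
      tauto
    have e1 : (eCount G S Sᶜ : ℝ) = eCount G S (A' \ S) + eCount G S A'ᶜ := by
      rw [hScompl, eCount_union_right G S _ _ hdisj]; push_cast; ring
    have e2 : (eCount G (A' \ S) (A' \ S)ᶜ : ℝ)
        = eCount G S (A' \ S) + eCount G (A' \ S) A'ᶜ := by
      rw [hDcompl, eCount_union_right G _ _ _ hdisj2, eCount_symm G (A' \ S) S]
      push_cast; ring
    have e3n : eCount G A' A'ᶜ = eCount G S A'ᶜ + eCount G (A' \ S) A'ᶜ := by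
      calc eCount G A' A'ᶜ = eCount G A'ᶜ A' := eCount_symm G A' A'ᶜ
        _ = eCount G A'ᶜ (S ∪ (A' \ S)) := by rw [Finset.union_sdiff_of_subset hS]
        _ = eCount G A'ᶜ S + eCount G A'ᶜ (A' \ S) :=
            eCount_union_right G _ _ _ Finset.disjoint_sdiff
        _ = eCount G S A'ᶜ + eCount G (A' \ S) A'ᶜ := by
            rw [eCount_symm G A'ᶜ S, eCount_symm G A'ᶜ (A' \ S)]
    have e3 : (eCount G A' A'ᶜ : ℝ) = eCount G S A'ᶜ + eCount G (A' \ S) A'ᶜ := by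
      rw [e3n]; push_cast; ring
    have evoln : vol G A' = vol G S + vol G (A' \ S) := by
      calc vol G A' = vol G (S ∪ (A' \ S)) := by rw [Finset.union_sdiff_of_subset hS]
        _ = vol G S + vol G (A' \ S) := Finset.sum_union Finset.disjoint_sdiff
    have evol : (vol G A' : ℝ) = vol G S + vol G (A' \ S) := by
      rw [evoln]; push_cast; ring
    have hnearS := hnear S (hS.trans hA'mem) (hSvol.trans (by linarith))
    rw [hf] at hmaxS
    simp only at hmaxS
    rw [e2, e3, evol] at hmaxS
    rw [e1] at hnearS
    linarith
  · -- volume bound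
    rw [hf] at hmaxA; simp only at hmaxA
    have hE' : (0:ℝ) ≤ (eCount G A' A'ᶜ : ℝ) := Nat.cast_nonneg _
    have hE : (0:ℝ) ≤ (eCount G A Aᶜ : ℝ) := Nat.cast_nonneg _
    have h1 : (vol G A : ℝ) - vol G A' ≤ 4 * (eCount G A Aᶜ : ℝ) / φ := by
      rw [le_div_iff₀ hφ0]
      nlinarith
    linarith
  · -- cut bound
    rw [hf] at hmaxA; simp only at hmaxA
    have hE : (0:ℝ) ≤ (eCount G A Aᶜ : ℝ) := Nat.cast_nonneg _
    nlinarith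
end
end

section
/- Let G = (V,E) be a finite undirected graph with Φ_G ≥ φ, where φ ∈ (0,1), let D ⊆ E, let G' = G − D be the graph obtained by deleting the edges of D, and let A ⊆ V. Consider the flow problem on G[A] with sink capacity deg_G(v) at each v ∈ A, capacity 2/φ on each edge of G[A], and source function Δ(u) = (2/φ)·|E_G({u}, V∖A)| + (4/φ)·(the number of edges of D incident to u) for u ∈ A. If there exists S ⊆ A with 0 < vol_{G'}(S), vol_{G'}(S) ≤ vol_{G'}(A)/2, vol_G(S) ≤ vol_G(V)/2, and |E_{G'}(S, A∖S)| ≤ (φ/6)·vol_{G'}(S), then this flow problem admits no feasible routing. -/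
/-!
STATEMENT 12 (Proposition B.1 — infeasibility certificate for pruning):
Let `G` have `Φ_G ≥ φ`, `φ ∈ (0,1)`, `D ⊆ E`, `G' = G − D`, and `A ⊆ V`. Consider the
flow problem on `G[A]` with sink capacity `deg_G(v)`, edge capacity `2/φ`, and source
`Δ(u) = (2/φ)·|E_G({u}, V∖A)| + (4/φ)·#{edges of D incident to u}`. If there exists
`S ⊆ A` with `0 < vol_{G'}(S)`, `vol_{G'}(S) ≤ vol_{G'}(A)/2`, `vol_G(S) ≤ vol_G(V)/2`,
and `|E_{G'}(S, A∖S)| ≤ (φ/6)·vol_{G'}(S)`, then the flow problem is infeasible.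
-/

open Finset

noncomputable section
open scoped Classical
set_option maxHeartbeats 1000000

/-- `f` is a feasible routing for the flow problem on `G[A]` with source function `Δ`,
sink capacity `deg_G(v)` at each `v ∈ A`, and capacity `2/φ` on each edge of `G[A]`. -/
def FeasibleRouting {V : Type*} [Fintype V] [DecidableEq V] (G : SimpleGraph V) (φ : ℝ)
    (A : Finset V) (Δ : V → ℝ) (f : V → V → ℝ) : Prop :=
  (∀ u v, f u v = - f v u) ∧
  (∀ u v, ¬(u ∈ A ∧ v ∈ A ∧ G.Adj u v) → f u v = 0) ∧
  (∀ u ∈ A, ∀ v ∈ A, G.Adj u v → |f u v| ≤ 2 / φ) ∧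
  (∀ v ∈ A, ∑ u ∈ A, f v u ≤ Δ v) ∧
  (∀ v ∈ A, Δ v + ∑ u ∈ A, f u v ≤ (G.degree v : ℝ))

private lemma eCount_eq_sum {V : Type*} [Fintype V] [DecidableEq V] (G : SimpleGraph V)
    (S T : Finset V) :
    eCount G S T = ∑ u ∈ S, ∑ v ∈ T, if G.Adj u v then 1 else 0 := by
  rw [eCount, Finset.card_filter, Finset.sum_product]

private lemma filter_sym2_card_le {V : Type*} [Fintype V] [DecidableEq V]
    (D : Finset (Sym2 V)) (T : Finset V) (u : V) :
    (T.filter fun v => s(u, v) ∈ D).card ≤ (D.filter fun e => u ∈ e).card := by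
  apply Finset.card_le_card_of_injOn (fun v => s(u, v))
  · intro v hv
    simp only [Finset.mem_coe, Finset.mem_filter] at hv ⊢
    exact ⟨hv.2, Sym2.mem_mk_left u v⟩
  · intro v₁ _ v₂ _ h
    exact Sym2.congr_right.mp h

theorem pruning_no_feasible_routing
    {V : Type*} [Fintype V] [DecidableEq V] (G : SimpleGraph V) (φ : ℝ)
    (hφ0 : 0 < φ) (hφ1 : φ < 1)
    -- Φ_G ≥ φ
    (hexp : ∀ S : Finset V, S.Nonempty → S ≠ Finset.univ →
      φ * min (vol G S : ℝ) (vol G Sᶜ : ℝ) ≤ (eCount G S Sᶜ : ℝ))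
    -- D is a set of edges of G; G' = G − D
    (D : Finset (Sym2 V)) (hD : D ⊆ G.edgeFinset)
    (A : Finset V)
    -- a sparse cut S of G'{A}
    (S : Finset V) (hSA : S ⊆ A)
    (hpos : 0 < vol (G.deleteEdges (D : Set (Sym2 V))) S)
    (hhalf : (vol (G.deleteEdges (D : Set (Sym2 V))) S : ℝ) ≤
      (vol (G.deleteEdges (D : Set (Sym2 V))) A : ℝ) / 2)
    (hhalfG : (vol G S : ℝ) ≤ (vol G Finset.univ : ℝ) / 2)
    (hsparse : (eCount (G.deleteEdges (D : Set (Sym2 V))) S (A \ S) : ℝ) ≤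
      (φ / 6) * (vol (G.deleteEdges (D : Set (Sym2 V))) S : ℝ)) :
    ¬ ∃ f : V → V → ℝ,
        FeasibleRouting G φ A
          (fun u => (2 / φ) * (eCount G {u} Aᶜ : ℝ) +
            (4 / φ) * ((D.filter fun s => u ∈ s).card : ℝ)) f := by
  rintro ⟨f, hskew, hsupp, hcap, -, hsink⟩
  set G' : SimpleGraph V := G.deleteEdges (D : Set (Sym2 V)) with hG'def
  have hφ' : φ ≠ 0 := ne_of_gt hφ0
  -- S is nonempty
  have hSne : S.Nonempty := by
    rcases S.eq_empty_or_nonempty with h | h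
    · rw [h] at hpos; simp [vol] at hpos
    · exact h
  -- volume monotonicity
  have hvol' : vol G' S ≤ vol G S := by
    apply Finset.sum_le_sum
    intro v _
    apply Finset.card_le_card
    intro u hu
    rw [SimpleGraph.mem_neighborFinset] at hu ⊢
    rw [hG'def, SimpleGraph.deleteEdges_adj] at hu
    exact hu.1
  have hposG : 0 < vol G S := lt_of_lt_of_le hpos hvol'
  -- S ≠ univ
  have hSuniv : S ≠ Finset.univ := by
    intro h
    subst h
    have h1 : (0 : ℝ) < (vol G Finset.univ : ℝ) := by exact_mod_cast hposG
    linarith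
  -- splitting of the complement
  have hScompl : Sᶜ = (A \ S) ∪ Aᶜ := by
    ext v
    simp only [Finset.mem_compl, Finset.mem_union, Finset.mem_sdiff]
    constructor
    · intro h
      by_cases hA : v ∈ A
      · exact Or.inl ⟨hA, h⟩
      · exact Or.inr hA
    · rintro (⟨-, h⟩ | h)
      · exact h
      · exact fun hS => h (hSA hS)
  have hdisj : Disjoint (A \ S) Aᶜ := by
    rw [Finset.disjoint_left]
    intro v hv hv'
    exact (Finset.mem_compl.mp hv') (Finset.mem_sdiff.mp hv).1
  -- conductance inequality with min = vol G S
  have hvolsplit : vol G Finset.univ = vol G S + vol G Sᶜ := by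
    rw [vol, vol, vol, ← Finset.sum_add_sum_compl S]
  have hmin : min (vol G S : ℝ) (vol G Sᶜ : ℝ) = (vol G S : ℝ) := by
    apply min_eq_left
    have : (vol G Finset.univ : ℝ) = (vol G S : ℝ) + (vol G Sᶜ : ℝ) := by
      exact_mod_cast congrArg (Nat.cast : ℕ → ℝ) hvolsplit
    linarith
  have hcond : φ * (vol G S : ℝ) ≤ (eCount G S Sᶜ : ℝ) := by
    have := hexp S hSne hSuniv
    rwa [hmin] at this
  -- cut decomposition across Sᶜ = (A \ S) ∪ Aᶜ
  have hN2 : eCount G S Sᶜ = eCount G S (A \ S) + eCount G S Aᶜ := by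
    rw [eCount_eq_sum, eCount_eq_sum, eCount_eq_sum, ← Finset.sum_add_distrib]
    apply Finset.sum_congr rfl
    intro u _
    rw [hScompl, Finset.sum_union hdisj]
  -- edge decomposition G = G' + D
  have hadjsplit : ∀ u v : V, (if G.Adj u v then (1 : ℕ) else 0)
      = (if G'.Adj u v then 1 else 0) + (if s(u, v) ∈ D then 1 else 0) := by
    intro u v
    by_cases hd : s(u, v) ∈ D
    · have hGadj : G.Adj u v := by
        have := hD hd
        rwa [SimpleGraph.mem_edgeFinset, SimpleGraph.mem_edgeSet] at this
      have hng : ¬ G'.Adj u v := by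
        rw [hG'def, SimpleGraph.deleteEdges_adj]
        simp [hd]
      simp [hGadj, hng, hd]
    · by_cases hg : G.Adj u v
      · have hg' : G'.Adj u v := by
          rw [hG'def, SimpleGraph.deleteEdges_adj]
          exact ⟨hg, by simpa using hd⟩
        simp [hg, hg', hd]
      · have hng : ¬ G'.Adj u v := by
          rw [hG'def, SimpleGraph.deleteEdges_adj]
          tauto
        simp [hg, hng, hd]
  have hN1 : eCount G S (A \ S)
      = eCount G' S (A \ S) + ∑ u ∈ S, ∑ v ∈ A \ S, (if s(u, v) ∈ D then 1 else 0) := by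
    rw [eCount_eq_sum, eCount_eq_sum, ← Finset.sum_add_distrib]
    apply Finset.sum_congr rfl
    intro u _
    rw [← Finset.sum_add_distrib]
    apply Finset.sum_congr rfl
    intro v _
    convert hadjsplit u v using 3
  -- the D-degree sum dominates the D-cut
  have hN3 : (∑ u ∈ S, ∑ v ∈ A \ S, (if s(u, v) ∈ D then 1 else 0))
      ≤ ∑ u ∈ S, (D.filter fun e => u ∈ e).card := by
    apply Finset.sum_le_sum
    intro u _
    calc ∑ v ∈ A \ S, (if s(u, v) ∈ D then 1 else 0)
        ≤ ∑ v ∈ Sᶜ, (if s(u, v) ∈ D then 1 else 0) := by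
          rw [hScompl, Finset.sum_union hdisj]
          exact Nat.le_add_right _ _
      _ = (Sᶜ.filter fun v => s(u, v) ∈ D).card := (Finset.card_filter _ _).symm
      _ ≤ (D.filter fun e => u ∈ e).card := filter_sym2_card_le D Sᶜ u
  -- single-vertex boundary counts sum up
  have hsing : ∑ v ∈ S, eCount G {v} Aᶜ = eCount G S Aᶜ := by
    rw [eCount_eq_sum G S Aᶜ]
    apply Finset.sum_congr rfl
    intro v _
    rw [eCount_eq_sum, Finset.sum_singleton]
  -- sum the sink constraints over S
  have hsum : ∑ v ∈ S, (((2 / φ) * (eCount G {v} Aᶜ : ℝ) +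
        (4 / φ) * ((D.filter fun s => v ∈ s).card : ℝ)) + ∑ u ∈ A, f u v)
      ≤ (vol G S : ℝ) := by
    rw [vol]
    push_cast
    apply Finset.sum_le_sum
    intro v hv
    exact hsink v (hSA hv)
  -- flow within S cancels
  have hzero : ∑ v ∈ S, ∑ u ∈ S, f u v = 0 := by
    have h1 : ∑ v ∈ S, ∑ u ∈ S, f u v = ∑ v ∈ S, ∑ u ∈ S, f v u := Finset.sum_comm
    have h2 : ∑ v ∈ S, ∑ u ∈ S, f v u = - ∑ v ∈ S, ∑ u ∈ S, f u v := by
      rw [← Finset.sum_neg_distrib]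
      refine Finset.sum_congr rfl fun v _ => ?_
      rw [← Finset.sum_neg_distrib]
      exact Finset.sum_congr rfl fun u _ => hskew v u
    linarith
  -- capacity bound on flow entering S
  have hcapL : -(2 / φ) * (eCount G S (A \ S) : ℝ) ≤ ∑ v ∈ S, ∑ u ∈ A \ S, f u v := by
    have hle : ∀ v ∈ S, ∀ u ∈ A \ S, -(2 / φ) * (if G.Adj v u then (1 : ℝ) else 0) ≤ f u v := by
      intro v hv u hu
      by_cases hadj : G.Adj v u
      · rw [if_pos hadj]
        have h := hcap u (Finset.mem_sdiff.mp hu).1 v (hSA hv) hadj.symm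
        have h2 := (abs_le.mp h).1
        linarith
      · rw [if_neg hadj]
        have h0 : f u v = 0 := hsupp u v (by rintro ⟨-, -, h⟩; exact hadj h.symm)
        rw [h0, mul_zero]
    calc -(2 / φ) * (eCount G S (A \ S) : ℝ)
        = ∑ v ∈ S, ∑ u ∈ A \ S, -(2 / φ) * (if G.Adj v u then (1 : ℝ) else 0) := by
          rw [eCount_eq_sum]
          push_cast
          rw [Finset.mul_sum]
          apply Finset.sum_congr rfl
          intro v _
          rw [Finset.mul_sum]
      _ ≤ ∑ v ∈ S, ∑ u ∈ A \ S, f u v :=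
          Finset.sum_le_sum fun v hv => Finset.sum_le_sum (hle v hv)
  -- combine: feasibility inequality
  have hfeas : (2 / φ) * (eCount G S Aᶜ : ℝ)
      + (4 / φ) * ((∑ u ∈ S, (D.filter fun e => u ∈ e).card : ℕ) : ℝ)
      - (2 / φ) * (eCount G S (A \ S) : ℝ) ≤ (vol G S : ℝ) := by
    have hsplitA : ∑ v ∈ S, ∑ u ∈ A, f u v
        = ∑ v ∈ S, ∑ u ∈ A \ S, f u v + ∑ v ∈ S, ∑ u ∈ S, f u v := by
      rw [← Finset.sum_add_distrib]
      apply Finset.sum_congr rfl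
      intro v _
      exact (Finset.sum_sdiff hSA).symm
    have hΔsum : ∑ v ∈ S, ((2 / φ) * (eCount G {v} Aᶜ : ℝ) +
        (4 / φ) * ((D.filter fun s => v ∈ s).card : ℝ))
        = (2 / φ) * (eCount G S Aᶜ : ℝ)
          + (4 / φ) * ((∑ u ∈ S, (D.filter fun e => u ∈ e).card : ℕ) : ℝ) := by
      rw [Finset.sum_add_distrib, ← Finset.mul_sum, ← Finset.mul_sum]
      congr 2
      · exact_mod_cast congrArg (Nat.cast : ℕ → ℝ) hsing
      · push_cast
        rfl
    rw [Finset.sum_add_distrib, hΔsum, hsplitA, hzero, add_zero] at hsum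
    linarith [hcapL, hsum]
  -- pass to real-valued abbreviations
  have hbc : (eCount G S (A \ S) : ℝ) = (eCount G' S (A \ S) : ℝ)
      + ((∑ u ∈ S, ∑ v ∈ A \ S, (if s(u, v) ∈ D then 1 else 0) : ℕ) : ℝ) := by
    exact_mod_cast congrArg (Nat.cast : ℕ → ℝ) hN1
  have hSSc : (eCount G S Sᶜ : ℝ) = (eCount G S (A \ S) : ℝ) + (eCount G S Aᶜ : ℝ) := by
    exact_mod_cast congrArg (Nat.cast : ℕ → ℝ) hN2
  have hct : ((∑ u ∈ S, ∑ v ∈ A \ S, (if s(u, v) ∈ D then 1 else 0) : ℕ) : ℝ)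
      ≤ ((∑ u ∈ S, (D.filter fun e => u ∈ e).card : ℕ) : ℝ) := by exact_mod_cast hN3
  -- multiply the feasibility inequality by φ
  have hkey : 2 * (eCount G S Aᶜ : ℝ)
      + 4 * ((∑ u ∈ S, (D.filter fun e => u ∈ e).card : ℕ) : ℝ)
      - 2 * (eCount G S (A \ S) : ℝ) ≤ φ * (vol G S : ℝ) := by
    have h := mul_le_mul_of_nonneg_left hfeas hφ0.le
    have e1 : φ * ((2 / φ) * (eCount G S Aᶜ : ℝ)) = 2 * (eCount G S Aᶜ : ℝ) := by
      field_simp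
    have e2 : φ * ((4 / φ) * ((∑ u ∈ S, (D.filter fun e => u ∈ e).card : ℕ) : ℝ))
        = 4 * ((∑ u ∈ S, (D.filter fun e => u ∈ e).card : ℕ) : ℝ) := by
      have h4 : φ * (4 / φ) = 4 := by field_simp
      rw [← mul_assoc, h4]
    have e3 : φ * ((2 / φ) * (eCount G S (A \ S) : ℝ)) = 2 * (eCount G S (A \ S) : ℝ) := by
      field_simp
    nlinarith [h]
  -- final arithmetic
  have ha : (0 : ℝ) ≤ (eCount G S Aᶜ : ℝ) := Nat.cast_nonneg _
  have hb : (0 : ℝ) ≤ (eCount G' S (A \ S) : ℝ) := Nat.cast_nonneg _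
  have hcn : (0 : ℝ) ≤ ((∑ u ∈ S, ∑ v ∈ A \ S, (if s(u, v) ∈ D then 1 else 0) : ℕ) : ℝ) :=
    Nat.cast_nonneg _
  have hv'pos : (0 : ℝ) < (vol G' S : ℝ) := by exact_mod_cast hpos
  have hmono : φ * (vol G' S : ℝ) ≤ φ * (vol G S : ℝ) :=
    mul_le_mul_of_nonneg_left (by exact_mod_cast hvol') hφ0.le
  have hφv' : 0 < φ * (vol G' S : ℝ) := mul_pos hφ0 hv'pos
  -- a + c ≤ 3b, φ v' ≤ a + b + c ≤ 4b ≤ (2/3) φ v'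
  nlinarith [hkey, hcond, hct, hbc, hSSc, hsparse, hmono, hφv', ha, hb, hcn]
end
end
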